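/- If S is a (finite) k-special sequence of length at least kh + k, then the edge-coloring of T_{k,h} derived from S is nonrepetitive. -/

import Mathlib

/-- A repetition: a nonempty sequence whose first half equals its second half. -/
def IsRepetition {α : Type*} (l : List α) : Prop := ∃ w : List α, w ≠ [] ∧ l = w ++ w

/-- An edge-coloring is nonrepetitive if no path carries a repetitive color sequence. -/
def NonrepEdgeColoring {V α : Type*} (G : SimpleGraph V) (c : Sym2 V → α) : Prop :=
  ∀ u v : V, ∀ p : G.Walk u v, p.IsPath → ¬ IsRepetition (p.edges.map c)

/-- The Thue chromatic index: minimum number of colors in a nonrepetitive edge-coloring. -/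
noncomputable def thueIdx {V : Type*} (G : SimpleGraph V) : ℕ :=
  sInf {n | ∃ c : Sym2 V → ℕ, (∀ e ∈ G.edgeSet, c e < n) ∧ NonrepEdgeColoring G c}

/-- `i 1, …, i (2r)` (1-indexed) is a `k`-bad index sequence for the 1-indexed sequence `S`,
with turning index `m`: the symbols form a repetition, the indices strictly decrease up to
position `m` and then strictly increase, consecutive indices differ by at most `k`, and the
gap at the turn is strictly less than `k` when the turn is internal. -/
def KBadIdx {α : Type*} (k : ℕ) (S : ℕ → α) (r m : ℕ) (i : ℕ → ℕ) : Prop :=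
  1 ≤ r ∧ 1 < m ∧ m ≤ 2 * r ∧
  (∀ j, 1 ≤ j → j ≤ r → S (i j) = S (i (j + r))) ∧
  (∀ j, 1 ≤ j → j < m → i (j + 1) < i j) ∧
  (∀ j, m ≤ j → j < 2 * r → i j < i (j + 1)) ∧
  (∀ j, 1 ≤ j → j < 2 * r → i (j + 1) ≤ i j + k ∧ i j ≤ i (j + 1) + k) ∧
  (m < 2 * r → i (m + 1) < i m + k)

/-- A finite sequence `S` (1-indexed, of length `n`) is `k`-special if it admits no
`k`-bad index sequence with all indices in `{1, …, n}`. -/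
def KSpecialFin {α : Type*} (k : ℕ) (S : ℕ → α) (n : ℕ) : Prop :=
  ¬ ∃ r m i, KBadIdx k S r m i ∧ ∀ j, 1 ≤ j → j ≤ 2 * r → 1 ≤ i j ∧ i j ≤ n

/-- An infinite sequence `S` (1-indexed) is `k`-special if it admits no `k`-bad index
sequence. -/
def KSpecialInf {α : Type*} (k : ℕ) (S : ℕ → α) : Prop :=
  ¬ ∃ r m i, KBadIdx k S r m i ∧ ∀ j, 1 ≤ j → j ≤ 2 * r → 1 ≤ i j

/-- The sequence `S_{n,c} = 1, 2, …, n, 1, 2, …, c` (1-indexed; entry at position `i` is `i`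
for `i ≤ n` and `i - n` for `i > n`). -/
def Snc (n : ℕ) (c : ℕ) : ℕ → ℕ := fun i => if i ≤ n then i else i - n

/-- The infinite `k`-ary tree: vertices are finite words over `Fin k` (the root is `[]`,
and the children of `v`, in left-to-right order, are `j :: v` for `j : Fin k`). -/
def kTree (k : ℕ) : SimpleGraph (List (Fin k)) :=
  SimpleGraph.fromRel (fun u v => ∃ j : Fin k, u = j :: v)

/-- The (1-based) position in the defining sequence of the color of the edge joining a
non-root vertex to its parent: the edges from the root get positions `1, …, k` left to
right, and if the edge from `v` to its parent has position `i`, then the edges to the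
children of `v` get positions `i + 1, …, i + k` left to right. -/
def edgeIdx {k : ℕ} : List (Fin k) → ℕ
  | [] => 0
  | j :: v => edgeIdx v + (j : ℕ) + 1

/-- The edge-coloring of the infinite `k`-ary tree derived from the 1-indexed sequence `S`. -/
def derivedColoring (k : ℕ) (S : ℕ → ℕ) : Sym2 (List (Fin k)) → ℕ :=
  Sym2.lift ⟨fun u v =>
    if v.length < u.length then S (edgeIdx u)
    else if u.length < v.length then S (edgeIdx v) else 0, by
      intro u v
      rcases lt_trichotomy u.length v.length with h | h | h <;>
        (beta_reduce; split_ifs <;> first | rfl | omega)⟩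

/-!
Along a path in a tree the edges first climb towards the root and then descend. The position in
`S` of an edge's colour (the `edgeIdx` of its lower endpoint) drops by between `1` and `k` at each
climbing step, rises by between `1` and `k` at each descending step, and changes by a nonzero
amount less than `k` at the turning vertex, whose two edges lead to distinct children. So the
positions along a repetitive path, read in the right direction, form a `k`-bad index sequence;
they are at most `k * h` because every vertex has depth at most `h`.
-/

open SimpleGraph

/-- The positions `i 1, …, i n` of the colours along a tree path that climbs for `p` steps and
then descends. -/
structure IsValley (k n p : ℕ) (i : ℕ → ℕ) : Prop where
  le : p ≤ n
  descend : ∀ j, 1 ≤ j → j < p → i (j + 1) < i j ∧ i j ≤ i (j + 1) + k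
  ascend : ∀ j, p < j → j < n → i j < i (j + 1) ∧ i (j + 1) ≤ i j + k
  turn : 1 ≤ p → p < n → i p ≠ i (p + 1) ∧ i (p + 1) < i p + k ∧ i p < i (p + 1) + k

namespace IsValley

variable {k n p : ℕ} {i : ℕ → ℕ}

theorem reverse (hv : IsValley k n p i) : IsValley k n (n - p) (fun j => i (n + 1 - j)) where
  le := Nat.sub_le n p
  descend j hj hjp := by
    have := hv.ascend (n - j) (by omega) (by omega)
    rwa [show n + 1 - (j + 1) = n - j by omega, show n + 1 - j = n - j + 1 by omega]
  ascend j hpj hjn := by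
    have := hv.descend (n - j) (by omega) (by omega)
    rwa [show n + 1 - (j + 1) = n - j by omega, show n + 1 - j = n - j + 1 by omega]
  turn h1 h2 := by
    have := hv.turn (by omega) (by omega)
    rw [show n + 1 - (n - p + 1) = p by omega, show n + 1 - (n - p) = p + 1 by omega]
    exact ⟨this.1.symm, this.2.2, this.2.1⟩

theorem zero_of_one (hv : IsValley k n 1 i) (hturn : 1 < n → i 1 < i 2) : IsValley k n 0 i where
  le := Nat.zero_le n
  descend j hj hj0 := by omega
  ascend j hj hjn := by
    rcases Nat.lt_or_ge 1 j with h | h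
    · exact hv.ascend j h hjn
    · obtain rfl : j = 1 := by omega
      exact ⟨hturn hjn, (hv.turn le_rfl hjn).2.1.le⟩
  turn h := by omega

theorem kBadIdx {α : Type*} {S : ℕ → α} {r : ℕ} (hv : IsValley k (2 * r) p i) (hr : 1 ≤ r)
    (hp : 1 < p) (hturn : p < 2 * r → i p < i (p + 1))
    (hrep : ∀ j, 1 ≤ j → j ≤ r → S (i j) = S (i (j + r))) : KBadIdx k S r p i := by
  refine ⟨hr, hp, hv.le, hrep, fun j hj hjp => (hv.descend j hj hjp).1, ?_, ?_,
    fun h => (hv.turn (by omega) h).2.1⟩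
  · intro j hpj hjr
    rcases hpj.lt_or_eq with h | rfl
    · exact (hv.ascend j h hjr).1
    · exact hturn hjr
  · intro j hj hjr
    rcases lt_trichotomy j p with h | rfl | h
    · have := hv.descend j hj h; omega
    · have := hv.turn hj hjr; omega
    · have := hv.ascend j h hjr; omega

end IsValley

section Reverse

variable {α : Type*} {S : ℕ → α} {i : ℕ → ℕ} {r L : ℕ}

theorem repetition_reverse (hrep : ∀ j, 1 ≤ j → j ≤ r → S (i j) = S (i (j + r))) :
    ∀ j, 1 ≤ j → j ≤ r → S (i (2 * r + 1 - j)) = S (i (2 * r + 1 - (j + r))) := by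
  intro j hj hjr
  rw [show 2 * r + 1 - j = r + 1 - j + r by omega, show 2 * r + 1 - (j + r) = r + 1 - j by omega]
  exact (hrep (r + 1 - j) (by omega) (by omega)).symm

theorem range_reverse (hrange : ∀ j, 1 ≤ j → j ≤ 2 * r → 1 ≤ i j ∧ i j ≤ L) :
    ∀ j, 1 ≤ j → j ≤ 2 * r → 1 ≤ i (2 * r + 1 - j) ∧ i (2 * r + 1 - j) ≤ L :=
  fun j _ _ => hrange _ (by omega) (by omega)

end Reverse

theorem not_kSpecialFin_of_isValley {α : Type*} {S : ℕ → α} {i : ℕ → ℕ} {k L r p : ℕ}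
    (hv : IsValley k (2 * r) p i) (hr : 1 ≤ r)
    (hrep : ∀ j, 1 ≤ j → j ≤ r → S (i j) = S (i (j + r)))
    (hrange : ∀ j, 1 ≤ j → j ≤ 2 * r → 1 ≤ i j ∧ i j ≤ L) : ¬ KSpecialFin k S L := by
  -- reversal turns a descending turn into an ascending one
  wlog hturn : 1 ≤ p → p < 2 * r → i p < i (p + 1) generalizing p i with H
  · refine H hv.reverse (repetition_reverse hrep) (range_reverse hrange) fun h1 h2 => ?_
    have := hv.turn (by omega) (by omega)
    rw [show 2 * r + 1 - (2 * r - p + 1) = p by omega, show 2 * r + 1 - (2 * r - p) = p + 1 by omega]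
    omega
  rcases Nat.lt_or_ge 1 p with hp | hp
  · exact fun h => h ⟨r, p, i, hv.kBadIdx hr hp (hturn (by omega)) hrep, hrange⟩
  · -- a turn at `p ≤ 1` means `i` increases throughout, so its reverse decreases throughout
    have hv₀ : IsValley k (2 * r) 0 i := by
      rcases Nat.le_one_iff_eq_zero_or_eq_one.mp hp with rfl | rfl
      · exact hv
      · exact hv.zero_of_one (hturn le_rfl)
    have hrev := hv₀.reverse
    rw [Nat.sub_zero] at hrev
    exact fun h => h ⟨r, 2 * r, _, hrev.kBadIdx hr (by omega) (by omega) (repetition_reverse hrep),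
      range_reverse hrange⟩

theorem Nat.exists_split_of_forall_or {P Q : ℕ → Prop} {n : ℕ} (hPQ : ∀ t < n, P t ∨ Q t)
    (hQ : ∀ t, t + 1 < n → Q t → Q (t + 1)) :
    ∃ p ≤ n, (∀ t < p, P t) ∧ ∀ t, p ≤ t → t < n → Q t := by
  induction n with
  | zero => exact ⟨0, le_rfl, fun t ht => by omega, fun t _ ht => by omega⟩
  | succ n ih =>
    obtain ⟨p, hpn, hP, hQ'⟩ := ih (fun t ht => hPQ t (by omega)) (fun t ht => hQ t (by omega))
    rcases hpn.lt_or_eq with hlt | rfl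
    · refine ⟨p, by omega, hP, fun t hpt htn => ?_⟩
      rcases Nat.lt_succ_iff_lt_or_eq.mp htn with h | rfl
      · exact hQ' t hpt h
      · obtain ⟨s, rfl⟩ : ∃ s, t = s + 1 := ⟨t - 1, by omega⟩
        exact hQ s (by omega) (hQ' s (by omega) (by omega))
    · rcases hPQ p (by omega) with h | h
      · refine ⟨p + 1, le_rfl, fun t ht => ?_, fun t _ _ => by omega⟩
        rcases Nat.lt_succ_iff_lt_or_eq.mp ht with ht | rfl
        exacts [hP t ht, h]
      · refine ⟨p, by omega, hP, fun t hpt htp => ?_⟩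
        obtain rfl : t = p := by omega
        exact h

section DerivedColoring

variable {k : ℕ}

theorem kTree_adj_iff {u v : List (Fin k)} :
    (kTree k).Adj u v ↔ (∃ a, u = a :: v) ∨ ∃ a, v = a :: u := by
  rw [kTree, SimpleGraph.fromRel_adj, and_iff_right_iff_imp]
  rintro (⟨a, rfl⟩ | ⟨a, rfl⟩) <;> simp

theorem edgeIdx_le_mul_length : ∀ l : List (Fin k), edgeIdx l ≤ k * l.length
  | [] => by simp [edgeIdx]
  | a :: l => by
    have := edgeIdx_le_mul_length l
    simp only [edgeIdx, List.length_cons, Nat.mul_succ]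
    omega

theorem derivedColoring_of_adj (S : ℕ → ℕ) {u v : List (Fin k)} (h : (kTree k).Adj u v) :
    derivedColoring k S s(u, v) = S (max (edgeIdx u) (edgeIdx v)) := by
  rcases kTree_adj_iff.mp h with ⟨a, rfl⟩ | ⟨a, rfl⟩ <;>
    simp [derivedColoring, edgeIdx, add_assoc]

/-- The position in `S` of the colour of the `j`-th edge of `q`, counting from `1`. -/
def pathIdx {u v : List (Fin k)} (q : (kTree k).Walk u v) (j : ℕ) : ℕ :=
  max (edgeIdx (q.getVert (j - 1))) (edgeIdx (q.getVert j))

variable {u v : List (Fin k)} (q : (kTree k).Walk u v)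

theorem getElem_edges_map_derivedColoring (S : ℕ → ℕ) {t : ℕ}
    (ht : t < (q.edges.map (derivedColoring k S)).length) :
    (q.edges.map (derivedColoring k S))[t] = S (pathIdx q (t + 1)) := by
  rw [List.getElem_map, Walk.getElem_edges,
    derivedColoring_of_adj S (q.adj_getVert_succ (by simpa using ht))]
  simp only [pathIdx, add_tsub_cancel_right]

theorem pathIdx_succ_of_up {t : ℕ} {a : Fin k} (h : q.getVert t = a :: q.getVert (t + 1)) :
    pathIdx q (t + 1) = edgeIdx (q.getVert (t + 1)) + a + 1 := by
  simp [pathIdx, h, edgeIdx, add_assoc]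

theorem pathIdx_succ_of_down {t : ℕ} {a : Fin k} (h : q.getVert (t + 1) = a :: q.getVert t) :
    pathIdx q (t + 1) = edgeIdx (q.getVert t) + a + 1 := by
  simp [pathIdx, h, edgeIdx, add_assoc]

theorem one_le_pathIdx {t : ℕ} (ht : t < q.length) : 1 ≤ pathIdx q (t + 1) := by
  rcases kTree_adj_iff.mp (q.adj_getVert_succ ht) with ⟨a, ha⟩ | ⟨a, ha⟩
  · rw [pathIdx_succ_of_up q ha]; omega
  · rw [pathIdx_succ_of_down q ha]; omega

theorem pathIdx_le {h : ℕ} (hdepth : ∀ t, (q.getVert t).length ≤ h) (j : ℕ) :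
    pathIdx q j ≤ k * h :=
  max_le ((edgeIdx_le_mul_length _).trans (Nat.mul_le_mul_left k (hdepth _)))
    ((edgeIdx_le_mul_length _).trans (Nat.mul_le_mul_left k (hdepth _)))

variable {q}

theorem SimpleGraph.Walk.IsPath.isValley_pathIdx (hq : q.IsPath) :
    ∃ p, IsValley k q.length p (pathIdx q) := by
  have hstep : ∀ t < q.length, (∃ a, q.getVert t = a :: q.getVert (t + 1)) ∨
      ∃ a, q.getVert (t + 1) = a :: q.getVert t :=
    fun t ht => kTree_adj_iff.mp (q.adj_getVert_succ ht)
  have hinj : ∀ s t, s ≤ q.length → t ≤ q.length → q.getVert s = q.getVert t → s = t :=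
    fun s t hs ht h => hq.getVert_injOn hs ht h
  -- a step away from the root followed by a step towards it would revisit a vertex
  have hpersist : ∀ t, t + 1 < q.length → (∃ a, q.getVert (t + 1) = a :: q.getVert t) →
      ∃ a, q.getVert (t + 1 + 1) = a :: q.getVert (t + 1) := by
    rintro t ht ⟨a, ha⟩
    refine (hstep (t + 1) ht).resolve_left ?_
    rintro ⟨b, hb⟩
    rw [ha, List.cons.injEq] at hb
    have := hinj _ _ (by omega) (by omega) hb.2
    omega
  obtain ⟨p, hp, hup, hdown⟩ := Nat.exists_split_of_forall_or hstep hpersist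
  refine ⟨p, hp, fun j hj hjp => ?_, fun j hpj hjn => ?_, fun hp1 hpn => ?_⟩
  · obtain ⟨s, rfl⟩ : ∃ s, j = s + 1 := ⟨j - 1, by omega⟩
    obtain ⟨a, ha⟩ := hup s (by omega)
    obtain ⟨b, hb⟩ := hup (s + 1) hjp
    have h1 := pathIdx_succ_of_up q ha
    have h2 := pathIdx_succ_of_up q hb
    have h3 : edgeIdx (q.getVert (s + 1)) = edgeIdx (q.getVert (s + 1 + 1)) + b + 1 := by
      rw [hb]; rfl
    have := b.isLt
    omega
  · obtain ⟨s, rfl⟩ : ∃ s, j = s + 1 := ⟨j - 1, by omega⟩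
    obtain ⟨a, ha⟩ := hdown s (by omega) (by omega)
    obtain ⟨b, hb⟩ := hdown (s + 1) (by omega) hjn
    have h1 := pathIdx_succ_of_down q ha
    have h2 := pathIdx_succ_of_down q hb
    have h3 : edgeIdx (q.getVert (s + 1)) = edgeIdx (q.getVert s) + a + 1 := by
      rw [ha]; rfl
    have := b.isLt
    omega
  · obtain ⟨s, rfl⟩ : ∃ s, p = s + 1 := ⟨p - 1, by omega⟩
    obtain ⟨a, ha⟩ := hup s (by omega)
    obtain ⟨b, hb⟩ := hdown (s + 1) le_rfl hpn
    have h1 := pathIdx_succ_of_up q ha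
    have h2 := pathIdx_succ_of_down q hb
    have hab : (a : ℕ) ≠ b := fun hab => by
      have := hinj s (s + 1 + 1) (by omega) (by omega) (by rw [ha, hb, Fin.ext hab])
      omega
    have := a.isLt
    have := b.isLt
    omega

end DerivedColoring

theorem not_kSpecialFin_of_isRepetition {k h L : ℕ} {S : ℕ → ℕ} {u v : List (Fin k)}
    {q : (kTree k).Walk u v} (hq : q.IsPath) (hdepth : ∀ t, (q.getVert t).length ≤ h)
    (hL : k * h ≤ L) (hrep : IsRepetition (q.edges.map (derivedColoring k S))) :
    ¬ KSpecialFin k S L := by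
  obtain ⟨w, hw, hqw⟩ := hrep
  obtain ⟨p, hv⟩ := hq.isValley_pathIdx
  have hlen : q.length = 2 * w.length := by simpa [two_mul] using congrArg List.length hqw
  rw [hlen] at hv
  refine not_kSpecialFin_of_isValley hv (List.length_pos_iff.mpr hw) (fun j hj hjr => ?_)
    fun j hj hjn => ?_
  · obtain ⟨t, rfl⟩ : ∃ t, j = t + 1 := ⟨j - 1, by omega⟩
    have hlt : t + w.length < (q.edges.map (derivedColoring k S)).length := by simp only [List.length_map, Walk.length_edges]; omega
    rw [Nat.add_right_comm, ← getElem_edges_map_derivedColoring q S (by omega : t < _),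
      ← getElem_edges_map_derivedColoring q S hlt]
    simp only [hqw, List.getElem_append_left (by omega : t < w.length),
      List.getElem_append_right (by omega : w.length ≤ t + w.length), Nat.add_sub_cancel]
  · obtain ⟨t, rfl⟩ : ∃ t, j = t + 1 := ⟨j - 1, by omega⟩
    exact ⟨one_le_pathIdx q (by omega), (pathIdx_le q hdepth _).trans hL⟩

theorem stmt13_general (k h L : ℕ) (S : ℕ → ℕ) (hL : k * h + k ≤ L)
    (hspec : KSpecialFin k S L) :
    NonrepEdgeColoring ((kTree k).induce {l : List (Fin k) | l.length ≤ h})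
      (fun e => derivedColoring k S (e.map Subtype.val)) := by
  intro u v p hp hrep
  let f := Embedding.induce (G := kTree k) {l : List (Fin k) | l.length ≤ h}
  refine not_kSpecialFin_of_isRepetition (q := p.map f.toHom) (hp.map f.injective)
    (fun t => ?_) (by omega : k * h ≤ L) ?_ hspec
  · rw [Walk.getVert_map]
    exact (p.getVert t).2
  · rwa [Walk.edges_map, List.map_map]

/-- If `S` is a finite `k`-special sequence of length `L ≥ kh + k`, then the edge-coloring
of the complete `k`-ary tree of height `h` (the vertices of the infinite `k`-ary tree at
distance at most `h` from the root) derived from `S` is nonrepetitive. -/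
theorem stmt13 (k h L : ℕ) (hk : 1 ≤ k) (S : ℕ → ℕ) (hL : k * h + k ≤ L)
    (hspec : KSpecialFin k S L) :
    NonrepEdgeColoring ((kTree k).induce {l : List (Fin k) | l.length ≤ h})
      (fun e => derivedColoring k S (e.map Subtype.val)) :=
  stmt13_general k h L S hL hspec
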